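/- Let V be a real inner product space, and let r ≥ 2, α > 0, δ ≥ 0 be real parameters, and let μ : V → ℝ be replaced by a constant viscosity value μ with 0 < μ₋ ≤ μ ≤ μ₊. Define the Carreau–Yasuda map σ(τ) = μ (δ^α + ‖τ‖^α)^{(r−2)/α} τ. Then for all τ, η ∈ V one has the Hölder continuity bound ‖σ(τ) − σ(η)‖ ≤ σ_c (δ^r + ‖τ‖^r + ‖η‖^r)^{(r−2)/r} ‖τ − η‖, where σ_c = μ₊ (r−1) 2^{(max(0, 1/α − 1/r))(r−2)}. -/

import Mathlib

/-!
Write `σ τ = μ G(‖τ‖) τ` with `G(s) = (δ^α + s^α)^((r-2)/α)`. Then `G` is nondecreasing and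
`G(s) / s^(r-2)` is nonincreasing. For `‖η‖ ≤ ‖τ‖` split
`σ τ - σ η = μ G(‖τ‖) (τ - η) + μ (G(‖τ‖) - G(‖η‖)) η`; the second monotonicity, combined with
`1 - u^p ≤ p (1/u - 1)` for `0 < u`, bounds the last term by `μ (r-2) G(‖τ‖) ‖τ - η‖`.
The power-mean inequality `(a^α + b^α)^(1/α) ≤ 2^(max 0 (1/α - 1/r)) (a^r + b^r)^(1/r)` then
turns `G(‖τ‖)` into the `r`-th power expression of the bound.
-/

namespace Real

theorem add_rpow_le_two_rpow_mul_add_rpow {a b p : ℝ} (ha : 0 ≤ a) (hb : 0 ≤ b) (hp : 0 ≤ p) :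
    (a + b) ^ p ≤ 2 ^ max 0 (p - 1) * (a ^ p + b ^ p) := by
  rcases le_total p 1 with hp1 | hp1
  · rw [max_eq_left (by linarith), rpow_zero, one_mul]
    exact rpow_add_le_add_rpow ha hb hp hp1
  · rw [max_eq_right (by linarith)]
    lift a to NNReal using ha
    lift b to NNReal using hb
    exact_mod_cast NNReal.rpow_add_le_mul_rpow_add_rpow a b hp1

theorem rpow_add_rpow_rpow_div_le_two_rpow_mul {a b α r q : ℝ} (ha : 0 ≤ a) (hb : 0 ≤ b)
    (hα : 0 < α) (hr : 0 < r) (hq : 0 ≤ q) :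
    (a ^ α + b ^ α) ^ (q / α) ≤
      2 ^ (max 0 (1 / α - 1 / r) * q) * (a ^ r + b ^ r) ^ (q / r) := by
  have hpow : ∀ x : ℝ, 0 ≤ x → (x ^ α) ^ (r / α) = x ^ r := fun x hx => by
    rw [← rpow_mul hx, mul_div_cancel₀ _ hα.ne']
  have hmean := add_rpow_le_two_rpow_mul_add_rpow (rpow_nonneg ha α) (rpow_nonneg hb α)
    (div_pos hr hα).le
  rw [hpow a ha, hpow b hb] at hmean
  calc (a ^ α + b ^ α) ^ (q / α) = ((a ^ α + b ^ α) ^ (r / α)) ^ (q / r) := by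
        rw [← rpow_mul (by positivity)]; field_simp
    _ ≤ (2 ^ max 0 (r / α - 1) * (a ^ r + b ^ r)) ^ (q / r) := by gcongr
    _ = 2 ^ (max 0 (1 / α - 1 / r) * q) * (a ^ r + b ^ r) ^ (q / r) := by
        rw [mul_rpow (by positivity) (by positivity), ← rpow_mul zero_le_two,
          max_mul_of_nonneg _ _ (by positivity), max_mul_of_nonneg _ _ hq, zero_mul, zero_mul]
        field_simp

theorem one_sub_rpow_mul_le {u p : ℝ} (hu : 0 < u) (hp : 0 ≤ p) :
    (1 - u ^ p) * u ≤ p * (1 - u) := by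
  have hlog : 1 - u ^ p ≤ p * (u⁻¹ - 1) :=
    calc 1 - u ^ p ≤ p * -log u := by
          linarith [log_le_sub_one_of_pos (rpow_pos_of_pos hu p), log_rpow hu p]
      _ ≤ p * (u⁻¹ - 1) := by
          gcongr
          linarith [log_le_sub_one_of_pos (inv_pos.2 hu), log_inv u]
  calc (1 - u ^ p) * u ≤ p * (u⁻¹ - 1) * u := by gcongr
    _ = p * (1 - u) := by field_simp

theorem sub_mul_le_of_rpow_mul_le_rpow_mul {a b p s t : ℝ} (hp : 0 ≤ p) (ht : 0 ≤ t)
    (hts : t ≤ s) (ha : 0 ≤ a) (h : t ^ p * a ≤ s ^ p * b) :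
    (a - b) * t ≤ p * a * (s - t) := by
  rcases ht.eq_or_lt with rfl | ht
  · simp only [mul_zero, sub_zero]
    positivity
  have hs : 0 < s := ht.trans_le hts
  have hb : (t / s) ^ p * a ≤ b := by
    rwa [div_rpow ht.le hs.le, div_mul_eq_mul_div, div_le_iff₀ (rpow_pos_of_pos hs p), mul_comm b]
  calc (a - b) * t ≤ (a - (t / s) ^ p * a) * t := by gcongr
    _ = a * s * ((1 - (t / s) ^ p) * (t / s)) := by field_simp
    _ ≤ a * s * (p * (1 - t / s)) :=
        mul_le_mul_of_nonneg_left (one_sub_rpow_mul_le (div_pos ht hs) hp) (by positivity)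
    _ = p * a * (s - t) := by field_simp

end Real

section

variable {E : Type*} [SeminormedAddCommGroup E] [NormedSpace ℝ E]

theorem norm_smul_sub_smul_le_of_rpow_mul_le {p a b : ℝ} {x y : E} (hp : 0 ≤ p) (hb : 0 ≤ b)
    (hba : b ≤ a) (hyx : ‖y‖ ≤ ‖x‖) (h : ‖y‖ ^ p * a ≤ ‖x‖ ^ p * b) :
    ‖a • x - b • y‖ ≤ (p + 1) * a * ‖x - y‖ := by
  have ha : 0 ≤ a := hb.trans hba
  have hslope := Real.sub_mul_le_of_rpow_mul_le_rpow_mul hp (norm_nonneg y) hyx ha h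
  have hsplit : a • x - b • y = a • (x - y) + (a - b) • y := by module
  calc ‖a • x - b • y‖ ≤ a * ‖x - y‖ + (a - b) * ‖y‖ := by
        rw [hsplit]
        refine (norm_add_le _ _).trans_eq ?_
        rw [norm_smul, norm_smul, Real.norm_of_nonneg ha,
          Real.norm_of_nonneg (sub_nonneg.2 hba)]
    _ ≤ a * ‖x - y‖ + p * a * ‖x - y‖ := by
        gcongr a * ‖x - y‖ + ?_
        exact hslope.trans (mul_le_mul_of_nonneg_left (norm_sub_norm_le x y) (by positivity))
    _ = (p + 1) * a * ‖x - y‖ := by ring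

theorem norm_smul_sub_smul_le_of_monotoneOn {g : ℝ → ℝ} {p : ℝ} (hp : 0 ≤ p)
    (hg₀ : ∀ s, 0 ≤ s → 0 ≤ g s) (hg : MonotoneOn g (Set.Ici 0))
    (hgp : ∀ t s, 0 ≤ t → t ≤ s → t ^ p * g s ≤ s ^ p * g t) (x y : E) :
    ‖g ‖x‖ • x - g ‖y‖ • y‖ ≤ (p + 1) * max (g ‖x‖) (g ‖y‖) * ‖x - y‖ := by
  wlog hyx : ‖y‖ ≤ ‖x‖ generalizing x y
  · rw [norm_sub_rev, max_comm, norm_sub_rev x]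
    exact this y x (le_of_not_ge hyx)
  rw [max_eq_left (hg (norm_nonneg y) (norm_nonneg x) hyx)]
  exact norm_smul_sub_smul_le_of_rpow_mul_le hp (hg₀ _ (norm_nonneg y))
    (hg (norm_nonneg y) (norm_nonneg x) hyx) hyx (hgp _ _ (norm_nonneg y) hyx)

variable {c α q : ℝ}

theorem monotoneOn_add_rpow_rpow (hc : 0 ≤ c) (hα : 0 < α) (hq : 0 ≤ q) :
    MonotoneOn (fun s : ℝ => (c + s ^ α) ^ q) (Set.Ici 0) := fun _ ht _ _ hts =>
  Real.rpow_le_rpow (add_nonneg hc (Real.rpow_nonneg ht α))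
    (add_le_add_right (Real.rpow_le_rpow ht hts hα.le) c) hq

theorem rpow_mul_mul_add_rpow_rpow_le (hc : 0 ≤ c) (hα : 0 < α) (hq : 0 ≤ q) {t s : ℝ}
    (ht : 0 ≤ t) (hts : t ≤ s) :
    t ^ (α * q) * (c + s ^ α) ^ q ≤ s ^ (α * q) * (c + t ^ α) ^ q := by
  have hs : 0 ≤ s := ht.trans hts
  have hpow : t ^ α ≤ s ^ α := Real.rpow_le_rpow ht hts hα.le
  rw [Real.rpow_mul ht, Real.rpow_mul hs, ← Real.mul_rpow (by positivity) (by positivity),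
    ← Real.mul_rpow (by positivity) (by positivity)]
  refine Real.rpow_le_rpow (by positivity) ?_ hq
  nlinarith [mul_le_mul_of_nonneg_right hpow hc]

theorem rpow_add_rpow_rpow_div_le_two_rpow_mul_add_rpow {δ s w r : ℝ} (hδ : 0 ≤ δ)
    (hs : 0 ≤ s) (hw : 0 ≤ w) (hα : 0 < α) (hr : 2 ≤ r) :
    (δ ^ α + s ^ α) ^ ((r - 2) / α) ≤
      2 ^ (max 0 (1 / α - 1 / r) * (r - 2)) * (δ ^ r + s ^ r + w ^ r) ^ ((r - 2) / r) := by
  refine (Real.rpow_add_rpow_rpow_div_le_two_rpow_mul hδ hs hα (by linarith)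
    (by linarith)).trans ?_
  gcongr _ * ?_ ^ _
  exact le_add_of_nonneg_right (by positivity)

theorem norm_add_rpow_rpow_smul_sub_le (hc : 0 ≤ c) (hα : 0 < α) (hq : 0 ≤ q) (x y : E) :
    ‖(c + ‖x‖ ^ α) ^ q • x - (c + ‖y‖ ^ α) ^ q • y‖ ≤
      (α * q + 1) * max ((c + ‖x‖ ^ α) ^ q) ((c + ‖y‖ ^ α) ^ q) * ‖x - y‖ :=
  norm_smul_sub_smul_le_of_monotoneOn (mul_nonneg hα.le hq) (fun _ _ => by positivity)
    (monotoneOn_add_rpow_rpow hc hα hq)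
    (fun _ _ ht hts => rpow_mul_mul_add_rpow_rpow_le hc hα hq ht hts) x y

end

open scoped RealInnerProductSpace

theorem carreau_yasuda_holder_continuity
    {V : Type*} [NormedAddCommGroup V] [InnerProductSpace ℝ V]
    (r α δ μ μm μp : ℝ) (hr : 2 ≤ r) (hα : 0 < α) (hδ : 0 ≤ δ)
    (hμm : 0 < μm) (hμ1 : μm ≤ μ) (hμ2 : μ ≤ μp)
    (σ : V → V)
    (hσ : ∀ τ : V, σ τ = (μ * (δ ^ α + ‖τ‖ ^ α) ^ ((r - 2) / α)) • τ) :
    ∀ τ η : V,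
      ‖σ τ - σ η‖ ≤
        (μp * (r - 1) * (2 : ℝ) ^ ((max 0 (1 / α - 1 / r)) * (r - 2))) *
          (δ ^ r + ‖τ‖ ^ r + ‖η‖ ^ r) ^ ((r - 2) / r) * ‖τ - η‖ := by
  intro τ η
  have hμ : 0 ≤ μ := hμm.le.trans hμ1
  have hμp : 0 ≤ μp := hμ.trans hμ2
  have hr1 : 0 ≤ r - 1 := by linarith
  have hq : 0 ≤ (r - 2) / α := div_nonneg (by linarith) hα.le
  have hradial := norm_add_rpow_rpow_smul_sub_le (Real.rpow_nonneg hδ α) hα hq τ η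
  set G : ℝ → ℝ := fun s => (δ ^ α + s ^ α) ^ ((r - 2) / α)
  set C := (2 : ℝ) ^ ((max 0 (1 / α - 1 / r)) * (r - 2))
  have hmax : max (G ‖τ‖) (G ‖η‖) ≤ C * (δ ^ r + ‖τ‖ ^ r + ‖η‖ ^ r) ^ ((r - 2) / r) := by
    refine max_le (rpow_add_rpow_rpow_div_le_two_rpow_mul_add_rpow hδ (norm_nonneg _)
      (norm_nonneg _) hα hr) ?_
    rw [add_right_comm]
    exact rpow_add_rpow_rpow_div_le_two_rpow_mul_add_rpow hδ (norm_nonneg _) (norm_nonneg _) hα hr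
  have hconst : α * ((r - 2) / α) + 1 = r - 1 := by field_simp; ring
  calc ‖σ τ - σ η‖ = μ * ‖G ‖τ‖ • τ - G ‖η‖ • η‖ := by
        rw [hσ, hσ, mul_smul, mul_smul, ← smul_sub, norm_smul, Real.norm_of_nonneg hμ]
    _ ≤ μ * ((r - 1) * max (G ‖τ‖) (G ‖η‖) * ‖τ - η‖) := by
        rw [← hconst]; exact mul_le_mul_of_nonneg_left hradial hμ
    _ ≤ μp * ((r - 1) * (C * (δ ^ r + ‖τ‖ ^ r + ‖η‖ ^ r) ^ ((r - 2) / r)) * ‖τ - η‖) := by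
        gcongr
    _ = _ := by ring
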